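/- arXiv:2605.19103 — 3 statements merged into one kernel-verified Lean document; each statement's English description precedes it below -/
import Mathlib

section
/- Let μ ∈ L^∞(ℂ) be supported in the disk D(w₀,r) = {|w - w₀| < r} and suppose μ is continuous at w₀. Then for every w with |w - w₀| ≥ r₀ > r, the Cauchy transform satisfies -(1/π) ∬_{D(w₀,r)} μ(ζ)/(ζ - w) dξdη = r² μ(w₀)/(w - w₀) + E(w,r), where the error E(w,r) satisfies |E(w,r)| ≤ C r² ω(r) with ω the modulus of continuity of μ at w₀ and C depending only on r₀; in particular the left side is asymptotic to r²μ(w₀)/(w-w₀) as r → 0 after normalizing by r². -/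
open MeasureTheory Set Metric

/-- Polar coordinates for integrals over radial sets in `ℂ`. -/
lemma polar_radial {E : Type*} [NormedAddCommGroup E] [NormedSpace ℝ E]
    {T : Set ℝ} (hT : MeasurableSet T) (g : ℂ → E) :
    ∫ ζ in {z : ℂ | ‖z‖ ∈ T}, g ζ
      = ∫ p in ((Set.Ioi (0:ℝ) ∩ T) ×ˢ Set.Ioo (-Real.pi) Real.pi),
          p.1 • g (Complex.polarCoord.symm p) := by
  have hS : MeasurableSet {z : ℂ | ‖z‖ ∈ T} := measurable_norm hT
  rw [← integral_indicator hS, ← Complex.integral_comp_polarCoord_symm]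
  rw [polarCoord_target]
  rw [show (Set.Ioi (0:ℝ) ∩ T) ×ˢ Set.Ioo (-Real.pi) Real.pi
      = (Set.Ioi (0:ℝ) ×ˢ Set.Ioo (-Real.pi) Real.pi) ∩ ((fun p : ℝ × ℝ => p.1) ⁻¹' T) by
    ext p; simp [Set.mem_prod]; tauto]
  rw [← setIntegral_indicator (measurable_fst hT)]
  apply setIntegral_congr_fun (by measurability)
  intro p hp
  have h1 : ‖Complex.polarCoord.symm p‖ = p.1 := by
    rw [Complex.norm_polarCoord_symm, abs_of_pos hp.1]
  simp only
  have h2 : ((Complex.polarCoord.symm p : ℂ) ∈ {z : ℂ | ‖z‖ ∈ T}) ↔ p.1 ∈ T := by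
    rw [Set.mem_setOf_eq, h1]
  by_cases hmem : p.1 ∈ T
  · rw [Set.indicator_of_mem (h2.mpr hmem), Set.indicator_of_mem (Set.mem_preimage.mpr hmem)]
  · rw [Set.indicator_of_notMem (fun h => hmem (h2.mp h)),
      Set.indicator_of_notMem (fun h => hmem (Set.mem_preimage.mp h)), smul_zero]

lemma inner_circle (s : ℝ) (hs : 0 < s) (a : ℂ) (ha : s < ‖a‖) :
    ∫ θ in Set.Ioo (-Real.pi) Real.pi, (circleMap 0 s θ - a)⁻¹
      = -(2 * Real.pi) / a := by
  have hane : ∀ z : ℂ, ‖z‖ ≤ s → z - a ≠ 0 := by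
    intro z hz
    rw [sub_ne_zero]
    intro h; rw [h] at hz; exact absurd hz (not_le.mpr ha)
  have hc : ContinuousOn (fun z : ℂ => (z - a)⁻¹) (Metric.closedBall 0 s) := by
    apply ContinuousOn.inv₀ (by fun_prop)
    intro z hz
    exact hane z (by simpa using
      Metric.mem_closedBall.mp hz)
  have hd : ∀ z ∈ Metric.ball (0:ℂ) s \ (∅ : Set ℂ),
      DifferentiableAt ℂ (fun z : ℂ => (z - a)⁻¹) z := by
    intro z hz
    have : z - a ≠ 0 := hane z (le_of_lt (by
      simpa using mem_ball_zero_iff.mp hz.1))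
    exact ((differentiableAt_id.sub_const a).inv this)
  have key := Complex.circleIntegral_sub_center_inv_smul_of_differentiable_on_off_countable
    hs Set.countable_empty hc hd
  rw [circleIntegral] at key
  have hptw : ∀ θ : ℝ, deriv (circleMap 0 s) θ •
      ((circleMap 0 s θ - 0)⁻¹ • (fun z : ℂ => (z - a)⁻¹) (circleMap 0 s θ))
      = Complex.I * (circleMap 0 s θ - a)⁻¹ := by
    intro θ
    have hne : circleMap 0 s θ ≠ 0 := circleMap_ne_center (ne_of_gt hs)
    simp only [deriv_circleMap, smul_eq_mul, sub_zero]
    rw [show circleMap 0 s θ * Complex.I * ((circleMap 0 s θ)⁻¹ * (circleMap 0 s θ - a)⁻¹)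
        = (circleMap 0 s θ * (circleMap 0 s θ)⁻¹) * (Complex.I * (circleMap 0 s θ - a)⁻¹) by
      ring, mul_inv_cancel₀ hne, one_mul]
  rw [intervalIntegral.integral_congr (fun θ _ => hptw θ),
    intervalIntegral.integral_const_mul] at key
  have hI : (Complex.I : ℂ) ≠ 0 := Complex.I_ne_zero
  have key2 : (∫ θ in (0:ℝ)..(2*Real.pi), (circleMap 0 s θ - a)⁻¹)
      = 2 * Real.pi * (0 - a)⁻¹ := by
    apply mul_left_cancel₀ hI
    rw [key, smul_eq_mul]; ring
  have hper : Function.Periodic (fun θ => (circleMap 0 s θ - a)⁻¹) (2*Real.pi) := by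
    intro θ; simp [periodic_circleMap 0 s θ]
  have hshift := hper.intervalIntegral_add_eq (-Real.pi) 0
  rw [show -Real.pi + 2*Real.pi = Real.pi by ring, zero_add] at hshift
  rw [← integral_Ioc_eq_integral_Ioo,
    ← intervalIntegral.integral_of_le (by linarith [Real.pi_pos] : -Real.pi ≤ Real.pi),
    hshift, key2]
  rw [zero_sub, ← neg_inv]
  field_simp

lemma polar_symm_eq_circleMap (s θ : ℝ) :
    (Complex.polarCoord.symm (s, θ) : ℂ) = circleMap 0 s θ := by
  simp [Complex.polarCoord_symm_apply, circleMap, Complex.exp_mul_I]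

lemma norm_sub_ge (x a : ℂ) : ‖a‖ - ‖x‖ ≤ ‖x - a‖ := by
  rw [norm_sub_rev]; exact norm_sub_norm_le a x

lemma integral_ball_inv {r : ℝ} (hr : 0 < r) {a : ℂ} (ha : r < ‖a‖) :
    ∫ ζ in Metric.ball (0:ℂ) r, (ζ - a)⁻¹ = -(Real.pi * r^2) / a := by
  have hset : Metric.ball (0:ℂ) r = {z : ℂ | ‖z‖ ∈ Set.Iio r} := by
    ext z; simp [mem_ball_zero_iff]
  rw [hset, polar_radial measurableSet_Iio, Set.Ioi_inter_Iio]
  have hbox : volume ((Set.Ioo (0:ℝ) r) ×ˢ (Set.Ioo (-Real.pi) Real.pi)) ≠ ⊤ := by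
    rw [Measure.volume_eq_prod, Measure.prod_prod, Real.volume_Ioo, Real.volume_Ioo]
    exact ENNReal.mul_ne_top ENNReal.ofReal_ne_top ENNReal.ofReal_ne_top
  have hmeas : AEStronglyMeasurable
      (fun p : ℝ × ℝ => p.1 • ((Complex.polarCoord.symm p : ℂ) - a)⁻¹) volume := by
    apply Measurable.aestronglyMeasurable
    apply Measurable.smul measurable_fst
    apply Measurable.inv
    apply Measurable.sub_const _ a
    have hcont : Continuous fun p : ℝ × ℝ => (Complex.polarCoord.symm p : ℂ) := by
      simp only [Complex.polarCoord_symm_apply]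
      fun_prop
    exact hcont.measurable
  have hint : IntegrableOn
      (fun p : ℝ × ℝ => p.1 • ((Complex.polarCoord.symm p : ℂ) - a)⁻¹)
      ((Set.Ioo (0:ℝ) r) ×ˢ (Set.Ioo (-Real.pi) Real.pi)) volume := by
    apply Measure.integrableOn_of_bounded hbox hmeas
      (M := r * (‖a‖ - r)⁻¹)
    filter_upwards [ae_restrict_mem (by measurability)] with p hp
    obtain ⟨hp1, _⟩ := hp
    set x : ℂ := (Complex.polarCoord.symm p : ℂ) with hx
    have h1 : ‖x‖ = p.1 := by
      rw [hx, Complex.norm_polarCoord_symm, abs_of_pos hp1.1]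
    have hlow : ‖a‖ - r ≤ ‖x - a‖ := by
      have h2 := norm_sub_ge x a
      have h3 : ‖a‖ = ‖a‖ := rfl
      rw [h3, h1] at h2
      have := hp1.2
      linarith
    have hpos : (0:ℝ) < ‖a‖ - r := by linarith
    rw [norm_smul, Real.norm_eq_abs, abs_of_pos hp1.1, norm_inv]
    apply mul_le_mul hp1.2.le _ (by positivity) hr.le
    exact inv_anti₀ hpos hlow
  rw [Measure.volume_eq_prod] at hint ⊢
  rw [setIntegral_prod _ hint]
  have hinner : ∀ s ∈ Set.Ioo (0:ℝ) r,
      (∫ θ in Set.Ioo (-Real.pi) Real.pi,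
        (s:ℝ) • ((Complex.polarCoord.symm (s, θ) : ℂ) - a)⁻¹)
      = (s:ℝ) • (-(2 * Real.pi) / a : ℂ) := by
    intro s hs
    rw [integral_smul]
    congr 1
    rw [show (fun θ => ((Complex.polarCoord.symm (s, θ) : ℂ) - a)⁻¹)
        = fun θ => (circleMap 0 s θ - a)⁻¹ by
      funext θ; rw [polar_symm_eq_circleMap]]
    exact inner_circle s hs.1 a (lt_trans hs.2 ha)
  rw [setIntegral_congr_fun measurableSet_Ioo hinner, integral_smul_const,
    ← integral_Ioc_eq_integral_Ioo, ← intervalIntegral.integral_of_le hr.le,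
    integral_id]
  rw [Complex.real_smul]
  push_cast
  field_simp
  ring

lemma integral_annulus {a b : ℝ} (h0 : 0 < a) (hab : a ≤ b) :
    ∫ ζ in {z : ℂ | ‖z‖ ∈ Set.Icc a b}, ‖ζ‖⁻¹ = (b - a) * (2 * Real.pi) := by
  have hinter : Set.Ioi (0:ℝ) ∩ Set.Icc a b = Set.Icc a b :=
    Set.inter_eq_self_of_subset_right (fun x hx => lt_of_lt_of_le h0 hx.1)
  rw [polar_radial measurableSet_Icc, hinter]
  rw [setIntegral_congr_fun (by measurability) (g := fun _ : ℝ × ℝ => (1:ℝ))]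
  · rw [setIntegral_const, smul_eq_mul, mul_one, measureReal_def, Measure.volume_eq_prod,
      Measure.prod_prod, Real.volume_Icc, Real.volume_Ioo,
      ← ENNReal.ofReal_mul (by linarith)]
    rw [ENNReal.toReal_ofReal (by nlinarith [Real.pi_pos] : (0:ℝ) ≤ (b - a) * (Real.pi - -Real.pi))]
    ring
  · intro p hp
    have hp1 : 0 < p.1 := lt_of_lt_of_le h0 hp.1.1
    have h1 : ‖(Complex.polarCoord.symm p : ℂ)‖ = p.1 := by
      rw [Complex.norm_polarCoord_symm, abs_of_pos hp1]
    simp only [h1, smul_eq_mul]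
    field_simp

lemma setIntegral_translate {E : Type*} [NormedAddCommGroup E] [NormedSpace ℝ E]
    (f : ℂ → E) (c : ℂ) (S : Set ℂ) :
    ∫ ζ in S, f ζ = ∫ ζ in ((· + c) ⁻¹' S), f (ζ + c) :=
  ((measurePreserving_add_right volume c).setIntegral_preimage_emb
    (MeasurableEquiv.addRight c).measurableEmbedding f S).symm

lemma dist_lower {w0 w ζ : ℂ} {r : ℝ} (hζ : ζ ∈ Metric.ball w0 r) :
    ‖w - w0‖ - r ≤ ‖ζ - w‖ := by
  have h1 : dist w w0 ≤ dist w ζ + dist ζ w0 := dist_triangle w ζ w0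
  have h2 : dist ζ w0 < r := Metric.mem_ball.mp hζ
  have h3 : dist w w0 = ‖w - w0‖ := dist_eq_norm w w0
  have h4 : dist w ζ = ‖ζ - w‖ := by rw [dist_comm]; exact dist_eq_norm ζ w
  linarith

lemma integrableOn_inv_norm_ball {w0 w : ℂ} {r r0 : ℝ} (hr : 0 < r) (hrr0 : r < r0)
    (hw : r0 ≤ ‖w - w0‖) :
    IntegrableOn (fun ζ : ℂ => ‖ζ - w‖⁻¹) (Metric.ball w0 r) volume := by
  apply Measure.integrableOn_of_bounded (M := (‖w - w0‖ - r)⁻¹)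
  · exact ne_of_lt measure_ball_lt_top
  · exact (measurable_id.sub_const w).norm.inv.aestronglyMeasurable
  · filter_upwards [ae_restrict_mem measurableSet_ball] with ζ hζ
    have h1 := dist_lower (w := w) hζ
    have h2 : (0:ℝ) < ‖w - w0‖ - r := by linarith
    rw [Real.norm_eq_abs, abs_of_nonneg (by positivity)]
    exact inv_anti₀ h2 h1

lemma bound_J {w0 w : ℂ} {r r0 : ℝ} (hr : 0 < r) (hrr0 : r < r0) (hr0 : 0 < r0)
    (hw : r0 ≤ ‖w - w0‖) :
    (∫ ζ in Metric.ball w0 r, ‖ζ - w‖⁻¹) ≤ 8 * Real.pi * r^2 / r0 := by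
  set d := ‖w - w0‖ with hd
  have hrd : r < d := lt_of_lt_of_le hrr0 hw
  rcases le_or_gt r (r0/2) with hcase | hcase
  · -- small radius : pointwise bound
    have hpt : ∀ ζ ∈ Metric.ball w0 r, ‖ζ - w‖⁻¹ ≤ 2/r0 := by
      intro ζ hζ
      have h1 := dist_lower (w := w) hζ
      have h2 : r0/2 ≤ ‖ζ - w‖ := by linarith [hw]
      rw [show (2:ℝ)/r0 = (r0/2)⁻¹ by field_simp]
      exact inv_anti₀ (by positivity) h2
    calc (∫ ζ in Metric.ball w0 r, ‖ζ - w‖⁻¹)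
        ≤ ∫ _ in Metric.ball w0 r, (2/r0 : ℝ) := by
          apply setIntegral_mono_on (integrableOn_inv_norm_ball hr hrr0 hw)
            (integrableOn_const measure_ball_lt_top.ne) measurableSet_ball hpt
      _ = (r^2 * Real.pi) * (2/r0) := by
          rw [setIntegral_const, smul_eq_mul, measureReal_def, Complex.volume_ball,
            ENNReal.toReal_mul, ENNReal.toReal_pow, ENNReal.toReal_ofReal hr.le]
          norm_num
      _ ≤ 8 * Real.pi * r^2 / r0 := by
          rw [div_eq_mul_inv, div_eq_mul_inv]
          have h8 : (0:ℝ) ≤ Real.pi * r^2 * r0⁻¹ := by positivity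
          nlinarith
  · -- large radius : annulus bound
    have htr : (∫ ζ in Metric.ball w0 r, ‖ζ - w‖⁻¹)
        = ∫ ζ in Metric.ball (w0 - w) r, ‖ζ‖⁻¹ := by
      rw [setIntegral_translate (fun ζ => ‖ζ - w‖⁻¹) w (Metric.ball w0 r)]
      have hpre : ((· + w) ⁻¹' Metric.ball w0 r) = Metric.ball (w0 - w) r := by
        ext z
        simp only [Set.mem_preimage, Metric.mem_ball, Complex.dist_eq]
        rw [show z + w - w0 = z - (w0 - w) from by ring]
      rw [hpre]
      simp
    have hsub : Metric.ball (w0 - w) r ⊆ {z : ℂ | ‖z‖ ∈ Set.Icc (d - r) (d + r)} := by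
      intro z hz
      have h1 : ‖z - (w0 - w)‖ < r := by
        rw [← Complex.dist_eq]
        exact Metric.mem_ball.mp hz
      have h2 : ‖w0 - w‖ = d := by
        rw [hd, norm_sub_rev]
      have h3 : |‖z‖ - ‖w0 - w‖| ≤ ‖z - (w0 - w)‖ := abs_norm_sub_norm_le _ _
      rw [h2] at h3
      have h4 := abs_le.mp h3
      exact ⟨by linarith [h4.1], by linarith [h4.2]⟩
    have hIann : IntegrableOn (fun ζ : ℂ => ‖ζ‖⁻¹)
        {z : ℂ | ‖z‖ ∈ Set.Icc (d - r) (d + r)} volume := by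
      apply Measure.integrableOn_of_bounded (M := (d - r)⁻¹)
      · apply ne_of_lt
        apply lt_of_le_of_lt (measure_mono (fun z hz => ?_))
          (measure_closedBall_lt_top (x := (0:ℂ)) (r := d + r))
        exact Metric.mem_closedBall.mpr (by simpa [Complex.dist_eq] using hz.2)
      · exact measurable_norm.inv.aestronglyMeasurable
      · filter_upwards [ae_restrict_mem (measurable_norm measurableSet_Icc)] with z hz
        rw [Real.norm_eq_abs, abs_of_nonneg (by positivity)]
        exact inv_anti₀ (by linarith) hz.1
    calc (∫ ζ in Metric.ball w0 r, ‖ζ - w‖⁻¹)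
        = ∫ ζ in Metric.ball (w0 - w) r, ‖ζ‖⁻¹ := htr
      _ ≤ ∫ ζ in {z : ℂ | ‖z‖ ∈ Set.Icc (d - r) (d + r)}, ‖ζ‖⁻¹ := by
          apply setIntegral_mono_set hIann
          · filter_upwards with z using by positivity
          · exact HasSubset.Subset.eventuallyLE hsub
      _ = ((d + r) - (d - r)) * (2 * Real.pi) :=
          integral_annulus (by linarith) (by linarith)
      _ = 4 * Real.pi * r := by ring
      _ ≤ 8 * Real.pi * r^2 / r0 := by
          rw [le_div_iff₀ hr0]
          nlinarith [mul_pos Real.pi_pos hr]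

/-- Asymptotics of the Cauchy transform of a Beltrami coefficient supported in `D(w₀,r)`
and continuous at `w₀`: for `|w - w₀| ≥ r₀ > r`,
`-(1/π) ∬ μ(ζ)/(ζ-w) = r² μ(w₀)/(w-w₀) + E(w,r)` with `|E(w,r)| ≤ C r² ω`, where `ω`
bounds the oscillation `|μ(ζ) - μ(w₀)|` on `D(w₀,r)` and `C` depends only on `r₀`. -/
theorem stmt_9 (w0 : ℂ) (r0 : ℝ) (hr0 : 0 < r0) :
    ∃ C > (0 : ℝ), ∀ r : ℝ, 0 < r → r < r0 →
      ∀ (μ : ℂ → ℂ) (ω : ℝ),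
        AEStronglyMeasurable μ volume →
        (∀ ζ, ζ ∉ Metric.ball w0 r → μ ζ = 0) →
        (∀ ζ ∈ Metric.ball w0 r, ‖μ ζ - μ w0‖ ≤ ω) →
        ∀ w : ℂ, r0 ≤ ‖w - w0‖ →
          ‖(-(1 / (Real.pi : ℂ)) * (∫ ζ in Metric.ball w0 r, μ ζ / (ζ - w)) -
              (r : ℂ) ^ 2 * μ w0 / (w - w0))‖ ≤ C * r ^ 2 * ω := by
  refine ⟨8 / r0, by positivity, ?_⟩
  intro r hr hrr0 μ ω hμm hsupp hosc w hw
  have hπ : (0:ℝ) < Real.pi := Real.pi_pos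
  have hωpos : 0 ≤ ω :=
    le_trans (norm_nonneg _) (hosc w0 (Metric.mem_ball_self hr))
  have hrd : r < ‖w - w0‖ := lt_of_lt_of_le hrr0 hw
  have hdpos : (0:ℝ) < ‖w - w0‖ - r := by linarith
  have hwne : w - w0 ≠ 0 := by
    intro h
    rw [h] at hrd
    simp at hrd
    linarith
  have hπC : (Real.pi : ℂ) ≠ 0 := Complex.ofReal_ne_zero.mpr (ne_of_gt hπ)
  -- integrability of (ζ - w)⁻¹ on the ball
  have hint2 : IntegrableOn (fun ζ : ℂ => (ζ - w)⁻¹) (Metric.ball w0 r) volume := by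
    apply Measure.integrableOn_of_bounded (M := (‖w - w0‖ - r)⁻¹)
      (ne_of_lt measure_ball_lt_top)
      ((measurable_id.sub_const w).inv.aestronglyMeasurable)
    filter_upwards [ae_restrict_mem measurableSet_ball] with ζ hζ
    rw [Pi.inv_apply, norm_inv]
    exact inv_anti₀ hdpos (dist_lower hζ)
  -- integrability of the difference term
  have hint1 : IntegrableOn (fun ζ : ℂ => (μ ζ - μ w0) * (ζ - w)⁻¹)
      (Metric.ball w0 r) volume := by
    have haesm : AEStronglyMeasurable (fun ζ : ℂ => (μ ζ - μ w0) * (ζ - w)⁻¹) volume :=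
      (hμm.sub aestronglyMeasurable_const).mul
        (measurable_id.sub_const w).inv.aestronglyMeasurable
    apply Measure.integrableOn_of_bounded
      (M := ω * (‖w - w0‖ - r)⁻¹) (ne_of_lt measure_ball_lt_top) haesm
    filter_upwards [ae_restrict_mem measurableSet_ball] with ζ hζ
    rw [norm_mul, norm_inv]
    apply mul_le_mul (hosc ζ hζ) (inv_anti₀ hdpos (dist_lower hζ)) (by positivity) hωpos
  -- exact value of ∫ (ζ - w)⁻¹
  have hI2 : (∫ ζ in Metric.ball w0 r, (ζ - w)⁻¹)
      = -(Real.pi * r^2) / (w - w0) := by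
    rw [setIntegral_translate (fun ζ => (ζ - w)⁻¹) w0 (Metric.ball w0 r)]
    have hpre : ((· + w0) ⁻¹' Metric.ball w0 r) = Metric.ball (0:ℂ) r := by
      ext z
      simp only [Set.mem_preimage, Metric.mem_ball, Complex.dist_eq]
      rw [show z + w0 - w0 = z - 0 from by ring]
    rw [hpre]
    rw [setIntegral_congr_fun measurableSet_ball
      (g := fun ζ : ℂ => (ζ - (w - w0))⁻¹)
      (fun ζ _ => by rw [show ζ + w0 - w = ζ - (w - w0) from by ring])]
    exact integral_ball_inv hr hrd
  -- splitting the integral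
  have hsplit : (∫ ζ in Metric.ball w0 r, μ ζ / (ζ - w))
      = (∫ ζ in Metric.ball w0 r, (μ ζ - μ w0) * (ζ - w)⁻¹)
        + μ w0 * ∫ ζ in Metric.ball w0 r, (ζ - w)⁻¹ := by
    rw [← integral_const_mul, ← integral_add hint1 (hint2.const_mul (μ w0))]
    apply setIntegral_congr_fun measurableSet_ball
    intro ζ _
    simp only
    rw [div_eq_mul_inv]
    ring
  set I1 : ℂ := ∫ ζ in Metric.ball w0 r, (μ ζ - μ w0) * (ζ - w)⁻¹ with hI1
  have hexp : -(1 / (Real.pi : ℂ)) * (∫ ζ in Metric.ball w0 r, μ ζ / (ζ - w)) -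
      (r : ℂ) ^ 2 * μ w0 / (w - w0) = -(1 / (Real.pi : ℂ)) * I1 := by
    rw [hsplit, hI2]
    field_simp
    ring
  rw [hexp]
  have habs : ‖-(1 / (Real.pi : ℂ)) * I1‖ = (1/Real.pi) * ‖I1‖ := by
    rw [norm_mul]
    congr 1
    rw [norm_neg, norm_div, norm_one, Complex.norm_real, Real.norm_eq_abs, abs_of_pos hπ]
  rw [habs]
  have hbound : ‖I1‖ ≤ ω * (8 * Real.pi * r^2 / r0) := by
    calc ‖I1‖ = ‖I1‖ := rfl
      _ ≤ ∫ ζ in Metric.ball w0 r, ‖(μ ζ - μ w0) * (ζ - w)⁻¹‖ :=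
          norm_integral_le_integral_norm _
      _ ≤ ∫ ζ in Metric.ball w0 r, ω * ‖ζ - w‖⁻¹ := by
          apply setIntegral_mono_on hint1.norm
            ((integrableOn_inv_norm_ball hr hrr0 hw).const_mul ω) measurableSet_ball
          intro ζ hζ
          rw [norm_mul, norm_inv]
          exact mul_le_mul_of_nonneg_right (hosc ζ hζ) (by positivity)
      _ = ω * ∫ ζ in Metric.ball w0 r, ‖ζ - w‖⁻¹ := integral_const_mul ω _
      _ ≤ ω * (8 * Real.pi * r^2 / r0) :=
          mul_le_mul_of_nonneg_left (bound_J hr hrr0 hr0 hw) hωpos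
  calc (1/Real.pi) * ‖I1‖ ≤ (1/Real.pi) * (ω * (8 * Real.pi * r^2 / r0)) :=
        mul_le_mul_of_nonneg_left hbound (by positivity)
    _ = 8 / r0 * r ^ 2 * ω := by field_simp
end

section
/- Let w₁, w₂ be locally injective holomorphic functions on a domain U ⊂ ℂ with equal Schwarzian derivatives S_{w₁} = S_{w₂} on U, and suppose they satisfy the same initial conditions w₁(0)=w₂(0), w₁'(0)=w₂'(0) ≠ 0, w₁''(0)=w₂''(0) at a point 0 ∈ U. Then w₁ = w₂ on the connected component of U containing 0. -/
/-- The Schwarzian derivative `S_w = (w''/w')' - (1/2)(w''/w')²`. -/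
noncomputable def schwarzian (w : ℂ → ℂ) (z : ℂ) : ℂ :=
  deriv (fun x => deriv (deriv w) x / deriv w x) z -
    (1 / 2) * (deriv (deriv w) z / deriv w z) ^ 2

open Metric Set

lemma vanish_of_hasDerivAt_mul {h a : ℂ → ℂ} {r C : ℝ}
    (hball : ∀ z ∈ closedBall (0:ℂ) r, HasDerivAt h (a z * h z) z)
    (hbound : ∀ z ∈ closedBall (0:ℂ) r, ‖a z‖ ≤ C)
    (h0 : h 0 = 0) : ∀ z ∈ closedBall (0:ℂ) r, h z = 0 := by
  intro z₀ hz₀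
  have hz₀r : ‖z₀‖ ≤ r := by simpa [Complex.dist_eq] using hz₀
  have hr : 0 ≤ r := le_trans (norm_nonneg _) hz₀r
  set g : ℝ → ℂ := fun t => (t : ℂ) * z₀ with hg
  have hmem : ∀ t ∈ Icc (0:ℝ) 1, g t ∈ closedBall (0:ℂ) r := by
    intro t ht
    simp only [hg, mem_closedBall, Complex.dist_eq, sub_zero]
    calc ‖(t : ℂ) * z₀‖ = |t| * ‖z₀‖ := by simp [Complex.norm_real]
      _ ≤ 1 * r := by
          apply mul_le_mul _ hz₀r (norm_nonneg _) zero_le_one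
          rw [abs_of_nonneg ht.1]; exact ht.2
      _ = r := one_mul r
  have hgder : ∀ t : ℝ, HasDerivAt g z₀ t := by
    intro t
    simpa using (Complex.ofRealCLM.hasDerivAt (x := t)).mul_const z₀
  set f : ℝ → ℂ := fun t => h (g t) with hf
  set f' : ℝ → ℂ := fun t => z₀ * (a (g t) * h (g t)) with hf'
  have hfder : ∀ t ∈ Icc (0:ℝ) 1, HasDerivAt f (f' t) t := by
    intro t ht
    have := (hball (g t) (hmem t ht)).scomp t (hgder t)
    simpa [hf, hf', Function.comp_def, smul_eq_mul] using this
  have key := norm_le_gronwallBound_of_norm_deriv_right_le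
    (f := f) (f' := f') (δ := 0) (K := r * C) (ε := 0) (a := 0) (b := 1)
    (fun t ht => (hfder t ht).continuousAt.continuousWithinAt)
    (fun t ht => ((hfder t (Ico_subset_Icc_self ht)).hasDerivWithinAt))
    (by simp [hf, hg, h0])
    (by
      intro t ht
      have htI : t ∈ Icc (0:ℝ) 1 := Ico_subset_Icc_self ht
      have h1 : ‖a (g t)‖ ≤ C := hbound _ (hmem t htI)
      have h2 : ‖g t‖ ≤ r := by simpa [Complex.dist_eq] using hmem t htI
      calc ‖f' t‖ = ‖z₀‖ * (‖a (g t)‖ * ‖f t‖) := by simp [hf', hf, norm_mul]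
        _ ≤ r * (C * ‖f t‖) :=
            mul_le_mul hz₀r (mul_le_mul_of_nonneg_right h1 (norm_nonneg _))
              (by positivity) hr
        _ = r * C * ‖f t‖ + 0 := by ring
      )
  have := key 1 (by norm_num)
  rw [gronwallBound_ε0_δ0] at this
  have : f 1 = 0 := norm_le_zero_iff.mp this
  simpa [hf, hg] using this


/-- Uniqueness for the Schwarz differential equation: two locally injective holomorphic
functions on an open set `U ∋ 0` with the same Schwarzian derivative and the same value,
first, and second derivative at `0` coincide on the connected component of `U` containing
`0`. -/
theorem stmt_14 (U : Set ℂ) (hU : IsOpen U) (h0 : (0 : ℂ) ∈ U)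
    (w1 w2 : ℂ → ℂ)
    (h1 : DifferentiableOn ℂ w1 U) (h2 : DifferentiableOn ℂ w2 U)
    (hd1 : ∀ z ∈ U, deriv w1 z ≠ 0) (hd2 : ∀ z ∈ U, deriv w2 z ≠ 0)
    (hS : ∀ z ∈ U, schwarzian w1 z = schwarzian w2 z)
    (e0 : w1 0 = w2 0)
    (e1 : deriv w1 0 = deriv w2 0) (e1' : deriv w1 0 ≠ 0)
    (e2 : deriv (deriv w1) 0 = deriv (deriv w2) 0) :
    ∀ z ∈ connectedComponentIn U 0, w1 z = w2 z := by
  -- analyticity of everything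
  have A1 : AnalyticOnNhd ℂ w1 U := h1.analyticOnNhd hU
  have A2 : AnalyticOnNhd ℂ w2 U := h2.analyticOnNhd hU
  have A1' : AnalyticOnNhd ℂ (deriv w1) U := A1.deriv
  have A2' : AnalyticOnNhd ℂ (deriv w2) U := A2.deriv
  have A1'' : AnalyticOnNhd ℂ (deriv (deriv w1)) U := A1'.deriv
  have A2'' : AnalyticOnNhd ℂ (deriv (deriv w2)) U := A2'.deriv
  set q1 : ℂ → ℂ := fun x => deriv (deriv w1) x / deriv w1 x with hq1def
  set q2 : ℂ → ℂ := fun x => deriv (deriv w2) x / deriv w2 x with hq2def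
  have hq1 : ∀ z ∈ U, DifferentiableAt ℂ q1 z := fun z hz =>
    ((A1'' z hz).differentiableAt).div ((A1' z hz).differentiableAt) (hd1 z hz)
  have hq2 : ∀ z ∈ U, DifferentiableAt ℂ q2 z := fun z hz =>
    ((A2'' z hz).differentiableAt).div ((A2' z hz).differentiableAt) (hd2 z hz)
  set h : ℂ → ℂ := fun z => q1 z - q2 z with hhdef
  set a : ℂ → ℂ := fun z => (1/2 : ℂ) * (q1 z + q2 z) with hadef
  -- the linear ODE for h
  have hODE : ∀ z ∈ U, HasDerivAt h (a z * h z) z := by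
    intro z hz
    have hd : HasDerivAt h (deriv q1 z - deriv q2 z) z :=
      ((hq1 z hz).hasDerivAt).sub ((hq2 z hz).hasDerivAt)
    have hs := hS z hz
    simp only [schwarzian, ← hq1def, ← hq2def] at hs
    have : deriv q1 z - deriv q2 z = a z * h z := by
      simp only [hadef, hhdef]
      linear_combination hs
    rwa [this] at hd
  -- pick a closed ball inside U
  obtain ⟨r', hr', hball'⟩ := Metric.isOpen_iff.mp hU 0 h0
  set r : ℝ := r' / 2 with hrdef
  have hr : 0 < r := by positivity
  have hsub : closedBall (0:ℂ) r ⊆ U :=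
    (closedBall_subset_ball (by simp [hrdef]; linarith)).trans hball'
  -- bound for a on the closed ball
  have hacont : ContinuousOn a (closedBall (0:ℂ) r) := by
    intro z hz
    exact (((hq1 z (hsub hz)).add (hq2 z (hsub hz))).const_mul
      (1/2 : ℂ)).continuousAt.continuousWithinAt
  obtain ⟨C, hC⟩ := (isCompact_closedBall (0:ℂ) r).exists_bound_of_continuousOn hacont
  -- h vanishes at 0
  have hzero : h 0 = 0 := by
    simp only [hhdef, hq1def, hq2def]
    rw [e1, e2, sub_self]
  -- h vanishes on the closed ball
  have hvanish : ∀ z ∈ closedBall (0:ℂ) r, h z = 0 :=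
    vanish_of_hasDerivAt_mul (fun z hz => hODE z (hsub hz)) hC hzero
  -- hence w1''w2' = w2''w1' on the ball, so w1'/w2' is constant
  have hq : ∀ z ∈ ball (0:ℂ) r, q1 z = q2 z := by
    intro z hz
    have := hvanish z (ball_subset_closedBall hz)
    simpa [hhdef, sub_eq_zero] using this
  set G : ℂ → ℂ := fun z => deriv w1 z / deriv w2 z with hGdef
  have hGder : ∀ z ∈ ball (0:ℂ) r, HasDerivAt G 0 z := by
    intro z hz
    have hzU : z ∈ U := hsub (ball_subset_closedBall hz)
    have hder : HasDerivAt G ((deriv (deriv w1) z * deriv w2 z -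
        deriv w1 z * deriv (deriv w2) z) / (deriv w2 z) ^ 2) z :=
      ((A1' z hzU).differentiableAt.hasDerivAt.div
        (A2' z hzU).differentiableAt.hasDerivAt (hd2 z hzU))
    have hnum : deriv (deriv w1) z * deriv w2 z - deriv w1 z * deriv (deriv w2) z = 0 := by
      have hqz := hq z hz
      simp only [hq1def, hq2def] at hqz
      field_simp [hd1 z hzU, hd2 z hzU] at hqz
      linear_combination hqz
    rwa [hnum, zero_div] at hder
  -- G is constant = 1 on the ball
  have hGone : ∀ z ∈ ball (0:ℂ) r, deriv w1 z = deriv w2 z := by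
    intro z hz
    have h0b : (0:ℂ) ∈ ball (0:ℂ) r := mem_ball_self hr
    have hconst : G z = G 0 := by
      apply (convex_ball (0:ℂ) r).is_const_of_fderivWithin_eq_zero
        (𝕜 := ℂ) (f := G)
        (fun x hx => ((hGder x hx).differentiableAt).differentiableWithinAt)
        ?_ hz h0b
      intro x hx
      rw [fderivWithin_of_isOpen isOpen_ball hx, (hGder x hx).hasFDerivAt.fderiv]
      ext y; simp
    have hG0 : G 0 = 1 := by
      simp only [hGdef]
      rw [e1, div_self (e1 ▸ e1')]
    have hzU : z ∈ U := hsub (ball_subset_closedBall hz)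
    have := hconst.trans hG0
    simp only [hGdef] at this
    rwa [div_eq_one_iff_eq (hd2 z hzU)] at this
  -- w1 - w2 is constant = 0 on the ball
  have hweq : ∀ z ∈ ball (0:ℂ) r, w1 z = w2 z := by
    intro z hz
    have h0b : (0:ℂ) ∈ ball (0:ℂ) r := mem_ball_self hr
    have hDder : ∀ x ∈ ball (0:ℂ) r, HasDerivAt (fun z => w1 z - w2 z) 0 x := by
      intro x hx
      have hxU : x ∈ U := hsub (ball_subset_closedBall hx)
      have := ((h1.differentiableAt (hU.mem_nhds hxU)).hasDerivAt).sub
        ((h2.differentiableAt (hU.mem_nhds hxU)).hasDerivAt)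
      rwa [hGone x hx, sub_self] at this
    have hconst : w1 z - w2 z = w1 0 - w2 0 := by
      apply (convex_ball (0:ℂ) r).is_const_of_fderivWithin_eq_zero
        (𝕜 := ℂ) (f := fun z => w1 z - w2 z)
        (fun x hx => ((hDder x hx).differentiableAt).differentiableWithinAt)
        ?_ hz h0b
      intro x hx
      rw [fderivWithin_of_isOpen isOpen_ball hx, (hDder x hx).hasFDerivAt.fderiv]
      ext y; simp
    rw [e0, sub_self] at hconst
    exact sub_eq_zero.mp hconst
  -- identity theorem on the connected component
  intro z hz
  set V : Set ℂ := connectedComponentIn U 0 with hVdef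
  have hVsub : V ⊆ U := connectedComponentIn_subset U 0
  have hVopen : IsOpen V := hU.connectedComponentIn
  have h0V : (0:ℂ) ∈ V := mem_connectedComponentIn h0
  have hAn : AnalyticOnNhd ℂ (fun z => w1 z - w2 z) V :=
    fun x hx => ((A1 x (hVsub hx)).sub (A2 x (hVsub hx)))
  have hev : (fun z => w1 z - w2 z) =ᶠ[nhds 0] 0 := by
    filter_upwards [ball_mem_nhds (0:ℂ) hr] with x hx
    simp [hweq x hx]
  have := hAn.eqOn_zero_of_preconnected_of_eventuallyEq_zero
    isPreconnected_connectedComponentIn h0V hev hz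
  simpa [sub_eq_zero] using this
end

section
/- Let f(z) = Σₙ cₙ zⁿ be holomorphic and zero-free on the unit disk with sup_{z∈D}|f(z)| ≤ 1. Then |c₁| ≤ 2|c₀| log(1/|c₀|) when 0 < |c₀| < 1, and in particular |c₁| ≤ 2/e. -/
open Complex Metric Set Filter

private lemma aux_xlog (x : ℝ) (hx : 0 < x) : x * Real.log (1/x) ≤ 1 / Real.exp 1 := by
  have h1 : Real.log (1/x) = Real.log (1/(Real.exp 1 * x)) + 1 := by
    rw [one_div, one_div, Real.log_inv, Real.log_inv, Real.log_mul (Real.exp_ne_zero 1) hx.ne',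
      Real.log_exp]
    ring
  have h2 : Real.log (1/(Real.exp 1 * x)) ≤ 1/(Real.exp 1 * x) - 1 :=
    Real.log_le_sub_one_of_pos (by positivity)
  have he : 0 < Real.exp 1 := Real.exp_pos 1
  calc x * Real.log (1/x) = x * (Real.log (1/(Real.exp 1 * x)) + 1) := by rw [h1]
    _ ≤ x * (1/(Real.exp 1 * x) - 1 + 1) := by
        apply mul_le_mul_of_nonneg_left _ hx.le
        linarith
    _ = 1 / Real.exp 1 := by field_simp; ring

private lemma aux_primitive (F : ℂ → ℂ) (hF : DifferentiableOn ℂ F (ball 0 1)) :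
    ∃ G : ℂ → ℂ, ∀ z ∈ ball (0:ℂ) 1, HasDerivAt G (F z) z := by
  obtain ⟨p, hp⟩ : AnalyticAt ℂ F 0 := hF.analyticAt (isOpen_ball.mem_nhds (by simp))
  have key : ∀ r : NNReal, 0 < r → (r:ℝ) < 1 → HasFPowerSeriesOnBall F p 0 r := by
    intro r hr0 hr1
    have hsub : closedBall (0:ℂ) r ⊆ ball 0 1 := closedBall_subset_ball hr1
    have h1 : HasFPowerSeriesOnBall F (cauchyPowerSeries F 0 r) 0 r :=
      (hF.mono hsub).hasFPowerSeriesOnBall hr0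
    rwa [h1.hasFPowerSeriesAt.eq_formalMultilinearSeries hp] at h1
  refine ⟨fun z => ∑' n : ℕ, (p.coeff n / (n+1)) * z^(n+1), ?_⟩
  intro z hz
  have hz1 : ‖z‖ < 1 := by simpa using hz
  have hznn : 0 ≤ ‖z‖ := norm_nonneg z
  set s : ℝ := (1 + ‖z‖)/2 with hs
  have hs0 : 0 < s := by positivity
  have hzs : ‖z‖ < s := by rw [hs]; linarith
  have hs1 : s < 1 := by rw [hs]; linarith
  set r : ℝ := (1 + s)/2 with hr
  have hsr : s < r := by rw [hr]; linarith
  have hr1 : r < 1 := by rw [hr]; linarith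
  have hr0 : 0 < r := lt_trans hs0 hsr
  have hball : HasFPowerSeriesOnBall F p 0 r.toNNReal :=
    key r.toNNReal (by simpa using hr0) (by rw [Real.coe_toNNReal _ hr0.le]; exact hr1)
  have hrad : (s.toNNReal : ENNReal) < p.radius := by
    refine lt_of_lt_of_le ?_ hball.r_le
    rw [ENNReal.coe_lt_coe]
    exact_mod_cast (Real.toNNReal_lt_toNNReal_iff hr0).2 hsr
  have hu : Summable (fun n => ‖p n‖ * s^n) := by
    have := p.summable_norm_mul_pow hrad
    simpa [Real.coe_toNNReal _ hs0.le] using this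
  have hsum := hasDerivAt_tsum_of_isPreconnected hu isOpen_ball
      (convex_ball (0:ℂ) s).isPreconnected
      (g := fun n w => (p.coeff n / (n+1)) * w^(n+1))
      (g' := fun n y => p.coeff n * y^n)
      ?_ ?_ (mem_ball_self hs0) ?_ (by simpa [mem_ball, dist_zero_right] using hzs)
  · have hmem : z ∈ Metric.eball (0:ℂ) r.toNNReal := by
      rw [Metric.emetric_ball_nnreal, mem_ball, dist_zero_right, Real.coe_toNNReal _ hr0.le]
      exact lt_trans hzs hsr
    have hFz : HasSum (fun n => p.coeff n * z^n) (F z) := by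
      have h2 := hball.hasSum hmem
      simp only [zero_add] at h2
      have hfun : (fun n => p.coeff n * z^n) = fun n => p n (fun _ => z) := by
        funext n
        rw [FormalMultilinearSeries.apply_eq_pow_smul_coeff, smul_eq_mul, mul_comm]
      rw [hfun]; exact h2
    exact hsum.congr_deriv hFz.tsum_eq
  · intro n y _
    have hne : ((n:ℂ)+1) ≠ 0 := by
      have : ((n+1 : ℕ) : ℂ) ≠ 0 := Nat.cast_ne_zero.2 (Nat.succ_ne_zero n)
      push_cast at this; exact this
    have := (hasDerivAt_pow (n+1) y).const_mul (p.coeff n / ((n:ℂ)+1))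
    refine this.congr_deriv ?_
    push_cast
    field_simp
  · intro n y hy
    have hy' : ‖y‖ ≤ s := le_of_lt (by simpa [mem_ball, dist_zero_right] using hy)
    rw [p.norm_apply_eq_norm_coef]
    calc ‖p.coeff n * y^n‖ = ‖p.coeff n‖ * ‖y‖^n := by rw [norm_mul, norm_pow]
      _ ≤ ‖p.coeff n‖ * s^n := by
          exact mul_le_mul_of_nonneg_left (pow_le_pow_left₀ (norm_nonneg y) hy' n) (norm_nonneg _)
  · apply Summable.congr summable_zero
    intro n
    simp

private lemma aux_log (f : ℂ → ℂ) (hf : DifferentiableOn ℂ f (ball 0 1))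
    (hnz : ∀ z ∈ ball (0:ℂ) 1, f z ≠ 0) :
    ∃ g : ℂ → ℂ, (∀ z ∈ ball (0:ℂ) 1, HasDerivAt g (deriv f z / f z) z) ∧
      ∀ z ∈ ball (0:ℂ) 1, f z = Complex.exp (g z) := by
  have h0 : (0:ℂ) ∈ ball (0:ℂ) 1 := by simp
  have hd : DifferentiableOn ℂ (deriv f) (ball 0 1) :=
    ((hf.analyticOnNhd isOpen_ball).deriv).differentiableOn
  have hF : DifferentiableOn ℂ (fun z => deriv f z / f z) (ball 0 1) := hd.div hf hnz
  obtain ⟨G, hG⟩ := aux_primitive _ hF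
  set g : ℂ → ℂ := fun z => G z - G 0 + Complex.log (f 0) with hgdef
  have hg : ∀ z ∈ ball (0:ℂ) 1, HasDerivAt g (deriv f z / f z) z := fun z hz =>
    ((hG z hz).sub_const (G 0)).add_const _
  refine ⟨g, hg, ?_⟩
  have key : ∀ z ∈ ball (0:ℂ) 1,
      f z * Complex.exp (-(g z)) = f 0 * Complex.exp (-(g 0)) := by
    intro z hz
    apply (convex_ball (0:ℂ) 1).is_const_of_fderivWithin_eq_zero (𝕜 := ℂ)
      (f := fun w => f w * Complex.exp (-(g w))) ?_ ?_ hz h0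
    · exact hf.mul (fun w hw => ((hg w hw).neg.cexp).differentiableAt.differentiableWithinAt)
    · intro x hx
      have hfx : HasDerivAt f (deriv f x) x :=
        (hf.differentiableAt (isOpen_ball.mem_nhds hx)).hasDerivAt
      have hgx : HasDerivAt (fun w => Complex.exp (-(g w)))
          (Complex.exp (-(g x)) * (-(deriv f x / f x))) x := (hg x hx).neg.cexp
      have hx' : HasDerivAt (fun w => f w * Complex.exp (-(g w))) 0 x := by
        have hmul := hfx.mul hgx
        refine hmul.congr_deriv ?_
        field_simp [hnz x hx]
        ring
      rw [fderivWithin_of_isOpen isOpen_ball hx]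
      refine hx'.hasFDerivAt.fderiv.trans ?_
      ext y
      simp
  intro z hz
  have hg0 : g 0 = Complex.log (f 0) := by simp [hgdef]
  have hk := key z hz
  rw [hg0, Complex.exp_neg, Complex.exp_neg, Complex.exp_log (hnz 0 h0),
    mul_inv_cancel₀ (hnz 0 h0)] at hk
  field_simp at hk
  exact hk

private lemma aux_core (f : ℂ → ℂ) (hf : DifferentiableOn ℂ f (ball 0 1))
    (hnz : ∀ z ∈ ball (0:ℂ) 1, f z ≠ 0)
    (hb : ∀ z ∈ ball (0:ℂ) 1, ‖f z‖ < 1) :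
    ‖deriv f 0‖ ≤ 2 * ‖f 0‖ * Real.log (1 / ‖f 0‖) := by
  obtain ⟨g, hg, hfg⟩ := aux_log f hf hnz
  have h0 : (0:ℂ) ∈ ball (0:ℂ) 1 := by simp
  set a := g 0 with ha_def
  have hRe : ∀ z ∈ ball (0:ℂ) 1, (g z).re < 0 := by
    intro z hz
    have h1 : Real.exp ((g z).re) < 1 := by
      rw [← Complex.norm_exp, ← hfg z hz]; exact hb z hz
    by_contra hc
    push_neg at hc
    have := Real.one_le_exp hc
    linarith
  have ha : a.re < 0 := hRe 0 h0
  have hden : ∀ z ∈ ball (0:ℂ) 1, g z + (starRingEnd ℂ) a ≠ 0 := by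
    intro z hz h
    have h1 : (g z + (starRingEnd ℂ) a).re < 0 := by
      simp only [Complex.add_re, Complex.conj_re]
      linarith [hRe z hz]
    rw [h] at h1
    simp at h1
  set h : ℂ → ℂ := fun z => (g z - a) / (g z + (starRingEnd ℂ) a) with hh_def
  have hgd : DifferentiableOn ℂ g (ball 0 1) := fun z hz =>
    ((hg z hz).differentiableAt).differentiableWithinAt
  have hhd : DifferentiableOn ℂ h (ball 0 1) :=
    (hgd.sub_const a).div (hgd.add_const _) hden
  have habs : ∀ z ∈ ball (0:ℂ) 1,
      ‖g z - a‖ < ‖g z + (starRingEnd ℂ) a‖ := by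
    intro z hz
    have hsq : ‖g z - a‖^2 < ‖g z + (starRingEnd ℂ) a‖^2 := by
      rw [Complex.sq_norm, Complex.sq_norm, Complex.normSq_apply, Complex.normSq_apply]
      simp only [Complex.sub_re, Complex.sub_im, Complex.add_re, Complex.add_im,
        Complex.conj_re, Complex.conj_im]
      nlinarith [hRe z hz, ha]
    exact lt_of_pow_lt_pow_left₀ 2 (norm_nonneg _) hsq
  have hh0 : h 0 = 0 := by simp [hh_def, ← ha_def]
  have hmaps : MapsTo h (ball (0:ℂ) 1) (ball (h 0) 1) := by
    rw [hh0]
    intro z hz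
    simp only [mem_ball, dist_zero_right, hh_def]
    rw [norm_div]
    have hpos : 0 < ‖g z + (starRingEnd ℂ) a‖ :=
      lt_of_le_of_lt (norm_nonneg _) (habs z hz)
    rw [div_lt_one hpos]
    exact habs z hz
  have schwarz : ‖deriv h 0‖ ≤ 1 := by
    have := Complex.norm_deriv_le_div_of_mapsTo_ball hhd (hmaps.mono_right ball_subset_closedBall) one_pos
    simpa using this
  set D := deriv f 0 / f 0 with hD_def
  have hga : HasDerivAt g D 0 := hg 0 h0
  have hderh : HasDerivAt h (D / (a + (starRingEnd ℂ) a)) 0 := by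
    have := (hga.sub_const a).div (hga.add_const ((starRingEnd ℂ) a)) (hden 0 h0)
    refine this.congr_deriv ?_
    rw [← ha_def]
    have hne := hden 0 h0
    rw [← ha_def] at hne
    field_simp
    ring
  have hderiv_h : deriv h 0 = D / (a + (starRingEnd ℂ) a) := hderh.deriv
  -- a + conj a = 2 * a.re
  have hconj : a + (starRingEnd ℂ) a = (2 * a.re : ℝ) := by
    rw [Complex.add_conj]
  have habs_sum : ‖a + (starRingEnd ℂ) a‖ = -(2 * a.re) := by
    rw [hconj, Complex.norm_real, Real.norm_eq_abs, abs_of_neg (by linarith)]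
  have hDbound : ‖D‖ ≤ -(2 * a.re) := by
    rw [hderiv_h, norm_div] at schwarz
    rw [← habs_sum]
    have hpos : 0 < ‖a + (starRingEnd ℂ) a‖ := by
      rw [habs_sum]; linarith
    calc ‖D‖ = ‖D‖ / ‖a + (starRingEnd ℂ) a‖
          * ‖a + (starRingEnd ℂ) a‖ := by field_simp
      _ ≤ 1 * ‖a + (starRingEnd ℂ) a‖ := by
          exact mul_le_mul_of_nonneg_right schwarz hpos.le
      _ = ‖a + (starRingEnd ℂ) a‖ := one_mul _
  -- a.re = log |f 0|
  have hare : a.re = Real.log (‖f 0‖) := by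
    have : f 0 = Complex.exp a := hfg 0 h0
    rw [this, Complex.norm_exp, Real.log_exp]
  have hf0pos : 0 < ‖f 0‖ := norm_pos_iff.mpr (hnz 0 h0)
  have hderiv_f : ‖deriv f 0‖ = ‖f 0‖ * ‖D‖ := by
    rw [hD_def, norm_div]
    field_simp
  rw [hderiv_f]
  have hlog : -(2 * a.re) = 2 * Real.log (1 / ‖f 0‖) := by
    rw [hare, one_div, Real.log_inv]; ring
  calc ‖f 0‖ * ‖D‖ ≤ ‖f 0‖ * (-(2 * a.re)) :=
        mul_le_mul_of_nonneg_left hDbound hf0pos.le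
    _ = 2 * ‖f 0‖ * Real.log (1 / ‖f 0‖) := by rw [hlog]; ring

/-- For `f` holomorphic, zero-free, and bounded by `1` on the unit disk, the first Taylor
coefficient satisfies `|c₁| ≤ 2|c₀| log(1/|c₀|)` when `0 < |c₀| < 1`, and in any case
`|c₁| ≤ 2/e`. -/
theorem stmt_17 (f : ℂ → ℂ)
    (hf : DifferentiableOn ℂ f (Metric.ball 0 1))
    (hnz : ∀ z ∈ Metric.ball (0 : ℂ) 1, f z ≠ 0)
    (hb : ∀ z ∈ Metric.ball (0 : ℂ) 1, ‖f z‖ ≤ 1) :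
    (0 < ‖f 0‖ → ‖f 0‖ < 1 →
      ‖deriv f 0‖ ≤
        2 * ‖f 0‖ * Real.log (1 / ‖f 0‖)) ∧
    ‖deriv f 0‖ ≤ 2 / Real.exp 1 := by
  have h0 : (0:ℂ) ∈ ball (0:ℂ) 1 := by simp
  have hf0pos : 0 < ‖f 0‖ := norm_pos_iff.mpr (hnz 0 h0)
  have main : ∀ s : ℝ, 0 < s → s < 1 →
      ‖deriv f 0‖ ≤
        2 * ‖f 0‖ * Real.log (1 / (s * ‖f 0‖)) := by
    intro s hs0 hs1
    set fs : ℂ → ℂ := fun z => (s:ℂ) * f z with hfs_def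
    have hfs : DifferentiableOn ℂ fs (ball 0 1) := hf.const_mul _
    have hnzs : ∀ z ∈ ball (0:ℂ) 1, fs z ≠ 0 := fun z hz =>
      mul_ne_zero (by exact_mod_cast hs0.ne') (hnz z hz)
    have hbs : ∀ z ∈ ball (0:ℂ) 1, ‖fs z‖ < 1 := by
      intro z hz
      simp only [hfs_def, norm_mul, Complex.norm_real, Real.norm_eq_abs, abs_of_pos hs0]
      calc s * ‖f z‖ ≤ s * 1 :=
            mul_le_mul_of_nonneg_left (hb z hz) hs0.le
        _ < 1 := by linarith
    have hcore := aux_core fs hfs hnzs hbs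
    have hderiv : deriv fs 0 = (s:ℂ) * deriv f 0 :=
      (((hf.differentiableAt (isOpen_ball.mem_nhds h0)).hasDerivAt).const_mul ((s:ℂ))).deriv
    have hfs0 : ‖fs 0‖ = s * ‖f 0‖ := by
      simp [hfs_def, abs_of_pos hs0]
    rw [hderiv, hfs0, norm_mul, Complex.norm_real, Real.norm_eq_abs, abs_of_pos hs0] at hcore
    have h2 : s * ‖deriv f 0‖ ≤
        s * (2 * ‖f 0‖ * Real.log (1 / (s * ‖f 0‖))) := by
      linarith [hcore]
    exact le_of_mul_le_mul_left h2 hs0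
  have hIoo : Ioo (0:ℝ) 1 ∈ nhdsWithin (1:ℝ) (Iio 1) :=
    Ioo_mem_nhdsLT_of_mem (by constructor <;> norm_num)
  constructor
  · intro _ _
    set c := ‖f 0‖ with hc_def
    have hcont : ContinuousAt (fun s : ℝ => 2 * c * Real.log (1 / (s * c))) 1 := by
      apply continuousAt_const.mul
      apply ContinuousAt.log
      · exact continuousAt_const.div (continuousAt_id.mul continuousAt_const)
          (by simp [hf0pos.ne'])
      · simp [hf0pos.ne']
    have htend : Tendsto (fun s : ℝ => 2 * c * Real.log (1 / (s * c)))
        (nhdsWithin 1 (Iio 1)) (nhds (2 * c * Real.log (1 / c))) := by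
      have h3 : Tendsto (fun s : ℝ => 2 * c * Real.log (1 / (s * c)))
          (nhdsWithin 1 (Iio 1)) (nhds (2 * c * Real.log (1 / ((1:ℝ) * c)))) :=
        hcont.tendsto.mono_left nhdsWithin_le_nhds
      simpa using h3
    exact ge_of_tendsto htend (eventually_of_mem hIoo (fun s hs => main s hs.1 hs.2))
  · have bound2 : ∀ s : ℝ, 0 < s → s < 1 →
        ‖deriv f 0‖ ≤ 2 / (Real.exp 1 * s) := by
      intro s hs0 hs1
      have h1 := main s hs0 hs1
      have hx : 0 < s * ‖f 0‖ := by positivity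
      have h2 := aux_xlog _ hx
      calc ‖deriv f 0‖
          ≤ 2 * ‖f 0‖ * Real.log (1 / (s * ‖f 0‖)) := h1
        _ = (2/s) * ((s * ‖f 0‖) *
              Real.log (1 / (s * ‖f 0‖))) := by field_simp
        _ ≤ (2/s) * (1 / Real.exp 1) := mul_le_mul_of_nonneg_left h2 (by positivity)
        _ = 2 / (Real.exp 1 * s) := by field_simp
    have htend : Tendsto (fun s : ℝ => 2 / (Real.exp 1 * s))
        (nhdsWithin 1 (Iio 1)) (nhds (2 / Real.exp 1)) := by
      have hcont : ContinuousAt (fun s : ℝ => 2 / (Real.exp 1 * s)) 1 :=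
        continuousAt_const.div (continuousAt_const.mul continuousAt_id)
          (by simp [Real.exp_ne_zero])
      have h3 : Tendsto (fun s : ℝ => 2 / (Real.exp 1 * s))
          (nhdsWithin 1 (Iio 1)) (nhds (2 / (Real.exp 1 * 1))) :=
        hcont.tendsto.mono_left nhdsWithin_le_nhds
      simpa using h3
    exact ge_of_tendsto htend (eventually_of_mem hIoo (fun s hs => bound2 s hs.1 hs.2))
end
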